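/- arXiv:2510.05045 — 7 statements merged into one kernel-verified Lean document; each statement's English description precedes it below -/
import Mathlib

section
/- The number of monotone extensive transformations of the chain {1,…,n} equals the n-th Catalan number (1/(n+1))·C(2n, n). -/
/-!
Every monotone extensive `α` on `Fin (n + 1)` fixes the last point, so it has a least fixed
point `m`. Below `m` we have `j < α j ≤ α m = m`, so subtracting one gives a monotone extensive
map on `Fin m`; above `m`, `α` is an arbitrary monotone extensive map on the remaining
`n - m` points. Hence the cardinalities satisfy the Catalan recursion
`c (n + 1) = ∑ₘ c m * c (n - m)`.
-/

theorem lt_apply_of_lt_of_isLeast_fixedPoints {X : Type*} [PartialOrder X] {f : X → X}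
    (hf : ∀ x, x ≤ f x) {i j : X} (h : IsLeast (Function.fixedPoints f) i) (hj : j < i) :
    j < f j :=
  (hf j).lt_of_not_ge fun hfj => (hj.trans_le (h.2 (le_antisymm hfj (hf j)))).false

abbrev CatalanMonoid (n : ℕ) := {α : Fin n → Fin n // Monotone α ∧ ∀ i, i ≤ α i}

namespace CatalanMonoid

open Function Fin

variable {a b m : ℕ}

def sum (β : CatalanMonoid a) (γ : CatalanMonoid b) : CatalanMonoid (a + b) :=
  ⟨addCases (motive := fun _ => Fin (a + b)) (fun i => castAdd b (β.1 i))
    (fun j => natAdd a (γ.1 j)), by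
    intro x y hxy
    induction x using addCases <;> induction y using addCases <;>
      simp only [addCases_left, addCases_right, le_def, val_castAdd, val_natAdd] at hxy ⊢
    · exact β.2.1 hxy
    · omega
    · omega
    · exact Nat.add_le_add_left (γ.2.1 (Nat.le_of_add_le_add_left hxy)) a, by
    intro x
    induction x using addCases <;>
      simp only [addCases_left, addCases_right, le_def, val_castAdd, val_natAdd]
    · exact β.2.2 _
    · exact Nat.add_le_add_left (γ.2.2 _) a⟩

@[simp] lemma sum_castAdd (β : CatalanMonoid a) (γ : CatalanMonoid b) (i : Fin a) :
    (sum β γ).1 (castAdd b i) = castAdd b (β.1 i) := by simp [sum]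

@[simp] lemma sum_natAdd (β : CatalanMonoid a) (γ : CatalanMonoid b) (j : Fin b) :
    (sum β γ).1 (natAdd a j) = natAdd a (γ.1 j) := by simp [sum]

def restrictLeft (α : CatalanMonoid (a + b)) (h : ∀ i : Fin a, (α.1 (castAdd b i) : ℕ) < a) :
    CatalanMonoid a :=
  ⟨fun i => ⟨α.1 (castAdd b i), h i⟩, fun _ _ hij => α.2.1 hij,
    fun i => α.2.2 (castAdd b i)⟩

def restrictRight (α : CatalanMonoid (a + b)) : CatalanMonoid b :=
  ⟨fun j => ⟨α.1 (natAdd a j) - a, by have := (α.1 (natAdd a j)).2; have := j.2; omega⟩,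
    fun i j hij => by
    have := α.2.1 (natAdd_le_natAdd_iff a |>.2 hij)
    simp only [le_def] at this ⊢
    omega, fun j => by
    have := α.2.2 (natAdd a j)
    simp only [le_def, val_natAdd] at this ⊢
    omega⟩

def sumEquiv : CatalanMonoid a × CatalanMonoid b ≃
    {α : CatalanMonoid (a + b) // ∀ i : Fin a, (α.1 (castAdd b i) : ℕ) < a} where
  toFun p := ⟨sum p.1 p.2, fun i => by simp⟩
  invFun α := (restrictLeft α.1 α.2, restrictRight α.1)
  left_inv p := by
    ext <;> simp [restrictLeft, restrictRight]
  right_inv α := by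
    ext x : 3
    induction x using addCases with
    | left i => simp [restrictLeft]
    | right j =>
      have := α.1.2.2 (natAdd a j)
      simp only [le_def, val_natAdd] at this
      simp only [restrictRight, sum_natAdd, natAdd_mk, Fin.ext_iff]
      omega

lemma isLeast_fixedPoints_sum_iff (β : CatalanMonoid a) (γ : CatalanMonoid b) (i : Fin a) :
    IsLeast (fixedPoints (sum β γ).1) (castAdd b i) ↔ IsLeast (fixedPoints β.1) i := by
  have hfix (j : Fin a) : castAdd b j ∈ fixedPoints (sum β γ).1 ↔ j ∈ fixedPoints β.1 := by
    simp [IsFixedPt]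
  refine ⟨fun ⟨hi, hlb⟩ => ⟨(hfix i).1 hi, fun j hj => hlb ((hfix j).2 hj)⟩,
    fun ⟨hi, hlb⟩ => ⟨(hfix i).2 hi, fun x hx => ?_⟩⟩
  induction x using addCases with
  | left j => exact hlb ((hfix j).1 hx)
  | right j => simp only [le_def, val_castAdd, val_natAdd]; omega

def lift (β : CatalanMonoid m) : CatalanMonoid (m + 1) :=
  ⟨lastCases (last m) fun j => (β.1 j).succ, by
    intro x y hxy
    induction x using lastCases <;> induction y using lastCases <;>
      simp only [lastCases_last, lastCases_castSucc, le_def, val_last, val_castSucc, val_succ]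
        at hxy ⊢
    · omega
    · omega
    · omega
    · exact Nat.add_le_add_right (β.2.1 hxy) 1, by
    intro x
    induction x using lastCases <;>
      simp only [lastCases_last, lastCases_castSucc, le_def, val_castSucc, val_succ,
        le_refl]
    exact Nat.le_succ_of_le (β.2.2 _)⟩

lemma isLeast_fixedPoints_lift (β : CatalanMonoid m) :
    IsLeast (fixedPoints (lift β).1) (last m) := by
  refine ⟨by simp [lift, IsFixedPt], fun x hx => ?_⟩
  induction x using lastCases with
  | last => exact le_rfl
  | cast j =>
    have : (j : ℕ) ≤ β.1 j := β.2.2 j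
    simp only [lift, mem_fixedPoints, IsFixedPt, lastCases_castSucc, Fin.ext_iff, val_succ,
      val_castSucc] at hx
    omega

def unlift (α : CatalanMonoid (m + 1)) (h : IsLeast (fixedPoints α.1) (last m)) :
    CatalanMonoid m :=
  ⟨fun j => ⟨α.1 j.castSucc - 1, by
    have := lt_apply_of_lt_of_isLeast_fixedPoints α.2.2 h (castSucc_lt_last j)
    have := (α.1 j.castSucc).2
    simp only [lt_def, val_castSucc] at *
    omega⟩, fun i j hij => by
    have := α.2.1 (castSucc_le_castSucc_iff.2 hij)
    simp only [le_def] at this ⊢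
    omega, fun j => by
    have := lt_apply_of_lt_of_isLeast_fixedPoints α.2.2 h (castSucc_lt_last j)
    simp only [lt_def, le_def, val_castSucc] at this ⊢
    omega⟩

def liftEquiv :
    CatalanMonoid m ≃ {α : CatalanMonoid (m + 1) // IsLeast (fixedPoints α.1) (last m)} where
  toFun β := ⟨lift β, isLeast_fixedPoints_lift β⟩
  invFun α := unlift α.1 α.2
  left_inv β := by
    ext j
    simp [lift, unlift]
  right_inv α := by
    ext x : 3
    induction x using lastCases with
    | last => simpa [lift] using α.2.1.symm
    | cast j =>
      have := lt_apply_of_lt_of_isLeast_fixedPoints α.1.2.2 α.2 (castSucc_lt_last j)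
      simp only [lt_def, val_castSucc] at this
      simp only [lift, unlift, succ_mk, lastCases_castSucc, Fin.ext_iff]
      omega

lemma card_isLeast_fixedPoints {N : ℕ} (i : Fin N) (k : ℕ) (hN : i + 1 + k = N) :
    Nat.card {α : CatalanMonoid N // IsLeast (fixedPoints α.1) i} =
      Nat.card (CatalanMonoid i) * Nat.card (CatalanMonoid k) := by
  obtain ⟨m, hm⟩ := i
  dsimp only at hN ⊢
  subst hN
  change Nat.card {α : CatalanMonoid (m + 1 + k) //
    IsLeast (fixedPoints α.1) (castAdd k (last m))} = _
  have hseg {α : CatalanMonoid (m + 1 + k)} (h : IsLeast (fixedPoints α.1) (castAdd k (last m)))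
      (i : Fin (m + 1)) : (α.1 (castAdd k i) : ℕ) < m + 1 := by
    have : α.1 (castAdd k i) ≤ castAdd k (last m) := h.1 ▸ α.2.1 (le_last i)
    rw [le_def] at this
    simp only [val_castAdd, val_last] at this
    omega
  calc _ = Nat.card {p : CatalanMonoid (m + 1) × CatalanMonoid k //
          IsLeast (fixedPoints p.1.1) (last m)} :=
        Nat.card_congr ((Equiv.subtypeEquiv sumEquiv fun p =>
          (isLeast_fixedPoints_sum_iff p.1 p.2 _).symm).trans
            (Equiv.subtypeSubtypeEquivSubtype hseg)).symm
    _ = Nat.card ({β : CatalanMonoid (m + 1) // IsLeast (fixedPoints β.1) (last m)} ×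
          CatalanMonoid k) := Nat.card_congr (Equiv.prodSubtypeFstEquivSubtypeProd
            (p := fun β : CatalanMonoid (m + 1) => IsLeast (fixedPoints β.1) (last m)))
    _ = _ := by rw [Nat.card_prod, Nat.card_congr liftEquiv.symm]

lemma card_succ_eq_sum (n : ℕ) : Nat.card (CatalanMonoid (n + 1)) =
    ∑ i : Fin (n + 1), Nat.card {α : CatalanMonoid (n + 1) // IsLeast (fixedPoints α.1) i} := by
  have hne (α : CatalanMonoid (n + 1)) : (fixedPoints α.1).Nonempty :=
    ⟨last n, le_antisymm (le_last _) (α.2.2 _)⟩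
  rw [← Nat.card_sigma,
    Nat.card_congr (Equiv.sigmaFiberEquiv fun α => sInf (fixedPoints α.1)).symm]
  refine Nat.card_congr (Equiv.sigmaCongrRight fun i => Equiv.subtypeEquivRight fun α => ?_)
  exact ⟨fun h => h ▸ isLeast_csInf (hne α), IsLeast.csInf_eq⟩

lemma card_eq_catalan (n : ℕ) : Nat.card (CatalanMonoid n) = catalan n := by
  induction n using Nat.strong_induction_on with
  | _ n ih =>
  cases n with
  | zero =>
    rw [catalan_zero, Nat.card_eq_one_iff_unique]
    exact ⟨⟨fun α β => Subtype.ext (funext finZeroElim)⟩,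
      ⟨⟨finZeroElim, fun i => i.elim0, finZeroElim⟩⟩⟩
  | succ n =>
    rw [card_succ_eq_sum, catalan_succ]
    refine Finset.sum_congr rfl fun i _ => ?_
    rw [card_isLeast_fixedPoints i (n - i) (by omega), ih i (by omega), ih (n - i) (by omega)]

end CatalanMonoid

/-- The number of monotone extensive transformations of the chain
`Fin n` equals the `n`-th Catalan number `(1/(n+1)) * C(2n, n)`. -/
theorem card_catalan_monoid (n : ℕ) :
    Nat.card {α : Fin n → Fin n // Monotone α ∧ ∀ i, i ≤ α i} =
      (2 * n).choose n / (n + 1) := by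
  rw [CatalanMonoid.card_eq_catalan n, catalan_eq_centralBinom_div, Nat.centralBinom]
end

section
/- The set S_n of stair triangular Boolean n×n matrices is closed under Boolean matrix multiplication and contains the identity matrix, hence forms a submonoid of the monoid of all Boolean n×n matrices. -/
/-- Boolean matrix multiplication: entry `(i,j)` of `A·B` is `1` iff
`max_k min(A i k, B k j) = 1`, i.e. iff some `k` has `A i k = B k j = 1`. -/
def bmul {n : ℕ} (A B : Matrix (Fin n) (Fin n) Bool) : Matrix (Fin n) (Fin n) Bool :=
  fun i j => decide (∃ k, A i k ∧ B k j)

/-- The identity Boolean matrix. -/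
def bId (n : ℕ) : Matrix (Fin n) (Fin n) Bool := fun i j => decide (i = j)

/-- A Boolean matrix is stair triangular if it is (upper) triangular (entries below
the diagonal are `0`), all diagonal entries are `1`, and `a_{ij} = 1` with `i < j`
forces `a_{ik} = 1` and `a_{kj} = 1` for all `i ≤ k ≤ j`. -/
def StairTriangular {n : ℕ} (A : Matrix (Fin n) (Fin n) Bool) : Prop :=
  (∀ i j : Fin n, j < i → A i j = false) ∧
  (∀ i, A i i = true) ∧
  ∀ i j : Fin n, i < j → A i j = true →
    ∀ k : Fin n, i ≤ k → k ≤ j → A i k = true ∧ A k j = true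

theorem bmul_eq_true {n : ℕ} {A B : Matrix (Fin n) (Fin n) Bool} {i j : Fin n} :
    bmul A B i j = true ↔ ∃ k, A i k = true ∧ B k j = true := by
  simp [bmul]

theorem stairTriangular_bId (n : ℕ) : StairTriangular (bId n) := by
  refine ⟨fun i j hji => ?_, fun i => ?_, fun i j hij h _ _ _ => ?_⟩
  · simp [bId, hji.ne']
  · simp [bId]
  · simp [bId, hij.ne] at h

namespace StairTriangular

variable {n : ℕ} {A B : Matrix (Fin n) (Fin n) Bool}

theorem le_of_eq_true (hA : StairTriangular A) {i j : Fin n} (h : A i j = true) : i ≤ j :=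
  not_lt.mp fun hji => by simp [hA.1 i j hji] at h

theorem left_of_le_of_le (hA : StairTriangular A) {i j k : Fin n} (h : A i j = true)
    (hik : i ≤ k) (hkj : k ≤ j) : A i k = true := by
  rcases (hA.le_of_eq_true h).lt_or_eq with hij | rfl
  · exact (hA.2.2 i j hij h k hik hkj).1
  · rwa [le_antisymm hkj hik]

theorem right_of_le_of_le (hA : StairTriangular A) {i j k : Fin n} (h : A i j = true)
    (hik : i ≤ k) (hkj : k ≤ j) : A k j = true := by
  rcases (hA.le_of_eq_true h).lt_or_eq with hij | rfl
  · exact (hA.2.2 i j hij h k hik hkj).2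
  · rwa [le_antisymm hkj hik]

theorem bmul (hA : StairTriangular A) (hB : StairTriangular B) :
    StairTriangular (_root_.bmul A B) := by
  refine ⟨fun i j hji => ?_, fun i => bmul_eq_true.2 ⟨i, hA.2.1 i, hB.2.1 i⟩, ?_⟩
  · by_contra h
    obtain ⟨m, hAim, hBmj⟩ := bmul_eq_true.1 (Bool.not_eq_false _ ▸ h)
    exact hji.not_ge ((hA.le_of_eq_true hAim).trans (hB.le_of_eq_true hBmj))
  · intro i j _ h k hik hkj
    obtain ⟨m, hAim, hBmj⟩ := bmul_eq_true.1 h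
    -- Route the path `i → m → j` through `k`, on whichever side of `m` it lies.
    constructor <;> rw [bmul_eq_true] <;> rcases le_total k m with hkm | hmk
    · exact ⟨k, hA.left_of_le_of_le hAim hik hkm, hB.2.1 k⟩
    · exact ⟨m, hAim, hB.left_of_le_of_le hBmj hmk hkj⟩
    · exact ⟨m, hA.right_of_le_of_le hAim hik hkm, hBmj⟩
    · exact ⟨k, hA.2.1 k, hB.right_of_le_of_le hBmj hmk hkj⟩

end StairTriangular

/-- The set `S_n` of stair triangular Boolean `n×n` matrices is closed
under Boolean matrix multiplication and contains the identity matrix, hence forms a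
submonoid of the monoid of all Boolean `n×n` matrices. -/
theorem stairTriangular_submonoid (n : ℕ) :
    (∀ A B : Matrix (Fin n) (Fin n) Bool,
      StairTriangular A → StairTriangular B → StairTriangular (bmul A B)) ∧
    StairTriangular (bId n) :=
  ⟨fun _ _ hA hB => hA.bmul hB, stairTriangular_bId n⟩
end

section
/- For each monotone extensive transformation α of {1,…,n}, let S(α) be the Boolean n×n matrix whose (i,j)-entry is 1 if and only if i ≤ j ≤ α(i). Then S(α) is stair triangular, the map α ↦ S(α) is injective, every stair triangular Boolean n×n matrix equals S(α) for some monotone extensive α, and S(αβ) = S(α)·S(β) for all monotone extensive α, β (where αβ : i ↦ β(α(i)) and · is Boolean matrix multiplication). Thus α ↦ S(α) is a monoid isomorphism from C_n onto S_n. -/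
/-- The matrix `S(α)`: its `(i,j)` entry is `1` iff `i ≤ j ≤ α(i)`. -/
def Smat {n : ℕ} (α : Fin n → Fin n) : Matrix (Fin n) (Fin n) Bool :=
  fun i j => decide (i ≤ j ∧ j ≤ α i)

/-!
Row `i` of `S(α)` is the interval `[i, α i]`, so `α` is recovered from `S(α)` as the position
of the last `1` in each row; conversely, the stair condition says precisely that the rows of a
stair triangular matrix are intervals `[i, α i]` whose right ends `α i` increase with `i`.
For the product, `j ∈ [i, β (α i)]` has the witness `k = min j (α i)`, with `k ∈ [i, α i]` and
`j ∈ [k, β k]`, and any witness `k ≤ α i` gives `j ≤ β k ≤ β (α i)` by monotonicity of `β`.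
-/

section

variable {n : ℕ}

theorem Smat_apply_eq_true {α : Fin n → Fin n} {i j : Fin n} :
    Smat α i j = true ↔ i ≤ j ∧ j ≤ α i := by
  simp [Smat]

theorem stairTriangular_Smat {α : Fin n → Fin n} (hα : Monotone α) (hαe : ∀ i, i ≤ α i) :
    StairTriangular (Smat α) := by
  refine ⟨fun i j hji => ?_, fun i => Smat_apply_eq_true.2 ⟨le_rfl, hαe i⟩, ?_⟩
  · simpa [Smat] using fun hij => absurd hij (not_le.2 hji)
  · intro i j _ hij k hik hkj
    rw [Smat_apply_eq_true] at hij
    exact ⟨Smat_apply_eq_true.2 ⟨hik, hkj.trans hij.2⟩,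
      Smat_apply_eq_true.2 ⟨hkj, hij.2.trans (hα hik)⟩⟩

theorem Smat_injective {α β : Fin n → Fin n} (hαe : ∀ i, i ≤ α i) (hβe : ∀ i, i ≤ β i)
    (h : Smat α = Smat β) : α = β := by
  funext i
  have hα : Smat β i (α i) = true := h ▸ Smat_apply_eq_true.2 ⟨hαe i, le_rfl⟩
  have hβ : Smat α i (β i) = true := h.symm ▸ Smat_apply_eq_true.2 ⟨hβe i, le_rfl⟩
  exact le_antisymm (Smat_apply_eq_true.1 hα).2 (Smat_apply_eq_true.1 hβ).2

theorem Smat_comp {α β : Fin n → Fin n} (hαe : ∀ i, i ≤ α i) (hβ : Monotone β)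
    (hβe : ∀ i, i ≤ β i) : Smat (β ∘ α) = bmul (Smat α) (Smat β) := by
  funext i j
  apply Bool.eq_iff_iff.2
  simp only [bmul, Smat, Function.comp_apply, decide_eq_true_eq]
  constructor
  · rintro ⟨hij, hj⟩
    refine ⟨min j (α i), ⟨le_min hij (hαe i), min_le_right _ _⟩, min_le_left _ _, ?_⟩
    rcases le_total j (α i) with hc | hc
    · simpa [min_eq_left hc] using hβe j
    · simpa [min_eq_right hc] using hj
  · rintro ⟨k, ⟨hik, hkα⟩, hkj, hjβ⟩
    exact ⟨hik.trans hkj, hjβ.trans (hβ hkα)⟩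

namespace StairTriangular

variable {A : Matrix (Fin n) (Fin n) Bool} (hA : StairTriangular A)
include hA

theorem rowSupport_nonempty (i : Fin n) : {j | A i j = true}.toFinset.Nonempty :=
  ⟨i, by simp [hA.2.1 i]⟩

def rowEnd (i : Fin n) : Fin n :=
  {j | A i j = true}.toFinset.max' (hA.rowSupport_nonempty i)

theorem apply_rowEnd (i : Fin n) : A i (hA.rowEnd i) = true := by
  simpa [rowEnd] using Finset.max'_mem _ (hA.rowSupport_nonempty i)

theorem le_rowEnd {i j : Fin n} (h : A i j = true) : j ≤ hA.rowEnd i :=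
  Finset.le_max' _ j (by simpa using h)

theorem self_le_rowEnd (i : Fin n) : i ≤ hA.rowEnd i :=
  hA.le_rowEnd (hA.2.1 i)

theorem monotone_rowEnd : Monotone hA.rowEnd := by
  intro i₁ i₂ h12
  by_contra! hlt
  have hi₂ : i₂ ≤ hA.rowEnd i₂ := hA.self_le_rowEnd i₂
  have hstep := (hA.2.2 i₁ (hA.rowEnd i₁) ((h12.trans hi₂).trans_lt hlt) (hA.apply_rowEnd i₁)
    i₂ h12 (hi₂.trans hlt.le)).2
  exact absurd (hA.le_rowEnd hstep) (not_le.2 hlt)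

theorem Smat_rowEnd : Smat hA.rowEnd = A := by
  funext i j
  apply Bool.eq_iff_iff.2
  rw [Smat_apply_eq_true]
  refine ⟨fun ⟨hij, hj⟩ => ?_, fun h => ⟨?_, hA.le_rowEnd h⟩⟩
  · rcases hij.eq_or_lt with rfl | hij
    · exact hA.2.1 i
    · exact (hA.2.2 i _ (hij.trans_le hj) (hA.apply_rowEnd i) j hij.le hj).1
  · by_contra! hji
    simp [hA.1 i j hji] at h

end StairTriangular

end

/-- For every monotone extensive `α`, the matrix `S(α)` is stair
triangular; the map `α ↦ S(α)` is injective on monotone extensive transformations;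
every stair triangular Boolean matrix is `S(α)` for some monotone extensive `α`;
and `S(αβ) = S(α)·S(β)` (with `αβ = β ∘ α`). Thus `α ↦ S(α)` is a monoid
isomorphism from `C_n` onto `S_n`. -/
theorem Smat_monoid_iso (n : ℕ) :
    (∀ α : Fin n → Fin n, Monotone α → (∀ i, i ≤ α i) → StairTriangular (Smat α)) ∧
    (∀ α β : Fin n → Fin n, (Monotone α ∧ ∀ i, i ≤ α i) → (Monotone β ∧ ∀ i, i ≤ β i) →
      Smat α = Smat β → α = β) ∧
    (∀ A : Matrix (Fin n) (Fin n) Bool, StairTriangular A →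
      ∃ α : Fin n → Fin n, Monotone α ∧ (∀ i, i ≤ α i) ∧ Smat α = A) ∧
    (∀ α β : Fin n → Fin n, (Monotone α ∧ ∀ i, i ≤ α i) → (Monotone β ∧ ∀ i, i ≤ β i) →
      Smat (β ∘ α) = bmul (Smat α) (Smat β)) :=
  ⟨fun _ hα hαe => stairTriangular_Smat hα hαe,
    fun _ _ hα hβ => Smat_injective hα.2 hβ.2,
    fun _ hA => ⟨hA.rowEnd, hA.monotone_rowEnd, hA.self_le_rowEnd, hA.Smat_rowEnd⟩,
    fun _ _ hα hβ => Smat_comp hα.2 hβ.1 hβ.2⟩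
end

section
/- For all monotone decreasing transformations α, β of the chain {1,…,n+1}, M(αβ) = M(α)·M(β), where αβ denotes the transformation i ↦ β(α(i)) and · is Boolean matrix multiplication (entry operations x + y := max{x,y}, x·y := min{x,y}). -/
/-! Row `i` of `M(α)` is the indicator of `{j | j < α(i+1)}`, so row `i` of `M(α)·M(β)` is the
union of the rows `k` of `M(β)` with `k < α(i+1)`. Since `β` is monotone these rows grow with `k`,
so the union is the last of them, row `α(i+1) - 1`, i.e. `{j | j < β(α(i+1))}`; when `α(i+1) = 0`
both sides are empty because `β 0 = 0`. -/

/-- The matrix `M(α)`: in 1-indexed terms its `(i,j)` entry is `1` iff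
`α(i+1) - 1 ≥ j`; here (0-indexed) the `(i,j)` entry is `1` iff `j < α(i.succ)`. -/
def Mmat {n : ℕ} (α : Fin (n + 1) → Fin (n + 1)) : Matrix (Fin n) (Fin n) Bool :=
  fun i j => decide ((j : ℕ) < (α i.succ : ℕ))

theorem Fin.exists_lt_and_lt_apply_succ_iff {n : ℕ} {β : Fin (n + 1) → Fin (n + 1)}
    (hβ : Monotone β) (hβ0 : β 0 = 0) (a : Fin (n + 1)) (j : ℕ) :
    (∃ k : Fin n, (k : ℕ) < a ∧ j < β k.succ) ↔ j < β a := by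
  constructor
  · rintro ⟨k, hka, hj⟩
    exact hj.trans_le (hβ (Fin.castSucc_lt_iff_succ_le.mp hka))
  · induction a using Fin.cases with
    | zero => simp [hβ0]
    | succ k => exact fun hj => ⟨k, by simp, hj⟩

theorem Mmat_mul_general (n : ℕ) (α β : Fin (n + 1) → Fin (n + 1))
    (hβ : Monotone β ∧ ∀ i, β i ≤ i) :
    Mmat (β ∘ α) = bmul (Mmat α) (Mmat β) := by
  have hβ0 : β 0 = 0 := Fin.le_zero_iff.mp (hβ.2 0)
  funext i j
  simp only [Mmat, bmul, Function.comp_apply, decide_eq_true_eq]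
  exact decide_eq_decide.mpr (Fin.exists_lt_and_lt_apply_succ_iff hβ.1 hβ0 _ _).symm

/-- For all monotone decreasing transformations `α, β` of the chain
with `n+1` elements, `M(αβ) = M(α)·M(β)`, where `αβ` is `α` followed by `β`. -/
theorem Mmat_mul (n : ℕ) (α β : Fin (n + 1) → Fin (n + 1))
    (hα : Monotone α ∧ ∀ i, α i ≤ i) (hβ : Monotone β ∧ ∀ i, β i ≤ i) :
    Mmat (β ∘ α) = bmul (Mmat α) (Mmat β) :=
  Mmat_mul_general n α β hβ
end

section
/- Let P be the Boolean n×n matrix with 1s exactly on the antidiagonal. The map α ↦ P·M(α)·P is a faithful representation of the semiring C⁻_{n+1} in the semiring of upper triangular Boolean n×n matrices: for all monotone decreasing transformations α, β of {1,…,n+1}, the matrix P·M(α)·P is upper triangular, P·M(αβ)·P = (P·M(α)·P)·(P·M(β)·P), P·M(α+β)·P = P·M(α)·P + P·M(β)·P, and the map is injective. -/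
/-- Boolean matrix addition: entrywise maximum. -/
def badd {n : ℕ} (A B : Matrix (Fin n) (Fin n) Bool) : Matrix (Fin n) (Fin n) Bool :=
  fun i j => A i j || B i j

/-- The antidiagonal permutation matrix: `P_{ij} = 1` iff `i + j = n + 1`
(1-indexed), i.e. iff `i + j + 1 = n` for 0-indexed `i, j : Fin n`. -/
def Pmat (n : ℕ) : Matrix (Fin n) (Fin n) Bool :=
  fun i j => decide ((i : ℕ) + (j : ℕ) + 1 = n)

/-- A Boolean matrix is upper triangular if `a_{ij} = 0` whenever `j < i`. -/
def UpperTri {n : ℕ} (A : Matrix (Fin n) (Fin n) Bool) : Prop :=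
  ∀ i j : Fin n, j < i → A i j = false

/-- The representation `α ↦ P·M(α)·P`. -/
def PMP {n : ℕ} (α : Fin (n + 1) → Fin (n + 1)) : Matrix (Fin n) (Fin n) Bool :=
  bmul (bmul (Pmat n) (Mmat α)) (Pmat n)

open Function

theorem Fin.eq_of_forall_val_lt_iff {n : ℕ} {a b : Fin (n + 1)}
    (h : ∀ t : Fin n, (t : ℕ) < a ↔ (t : ℕ) < b) : a = b := by
  refine le_antisymm ?_ ?_ <;> by_contra! hlt <;> rw [Fin.lt_def] at hlt
  · exact lt_irrefl _ ((h ⟨b, by omega⟩).mp hlt)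
  · exact lt_irrefl _ ((h ⟨a, by omega⟩).mpr hlt)

section BooleanMatrix

variable {n : ℕ}

theorem bmul_submatrix {e : Fin n → Fin n} (he : Surjective e) (f g : Fin n → Fin n)
    (A B : Matrix (Fin n) (Fin n) Bool) :
    bmul (A.submatrix f e) (B.submatrix e g) = (bmul A B).submatrix f g := by
  ext i j
  exact decide_eq_decide.mpr (he.exists (p := fun k => A (f i) k ∧ B k (g j))).symm

theorem badd_submatrix (f g : Fin n → Fin n) (A B : Matrix (Fin n) (Fin n) Bool) :
    badd (A.submatrix f g) (B.submatrix f g) = (badd A B).submatrix f g :=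
  rfl

theorem Pmat_apply_eq_true_iff (i j : Fin n) : Pmat n i j = true ↔ i.rev = j := by
  rw [Pmat, decide_eq_true_iff, Fin.ext_iff, Fin.val_rev]
  omega

theorem Pmat_bmul (A : Matrix (Fin n) (Fin n) Bool) :
    bmul (Pmat n) A = A.submatrix Fin.rev id := by
  ext i j
  simp [bmul, Pmat_apply_eq_true_iff]

theorem bmul_Pmat (A : Matrix (Fin n) (Fin n) Bool) :
    bmul A (Pmat n) = A.submatrix id Fin.rev := by
  ext i j
  simp [bmul, Pmat_apply_eq_true_iff, Fin.rev_eq_iff]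

theorem upperTri_submatrix_rev {A : Matrix (Fin n) (Fin n) Bool}
    (hA : ∀ i j, i < j → A i j = false) : UpperTri (A.submatrix Fin.rev Fin.rev) :=
  fun _ _ hji => hA _ _ (Fin.rev_lt_rev.mpr hji)

end BooleanMatrix

section Mmat

variable {n : ℕ}

theorem Mmat_apply_eq_false_of_lt {α : Fin (n + 1) → Fin (n + 1)} (hα : ∀ i, α i ≤ i) {i j : Fin n} (hij : i < j) :
    Mmat α i j = false := by
  have := Fin.le_def.mp (hα i.succ)
  simp only [Mmat, Fin.val_succ, decide_eq_false_iff_not, not_lt] at this ⊢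
  omega

theorem Mmat_comp {α β : Fin (n + 1) → Fin (n + 1)} (hβ : Monotone β) (hβ0 : β 0 = 0) :
    Mmat (β ∘ α) = bmul (Mmat α) (Mmat β) := by
  ext i j
  simp only [Mmat, bmul, comp_apply, decide_eq_decide, decide_eq_true_iff]
  constructor
  · intro hj
    obtain ⟨k, hk⟩ : ∃ k : Fin n, k.succ = α i.succ := by
      refine Fin.exists_succ_eq.mpr fun h0 => ?_
      rw [h0, hβ0] at hj
      exact Nat.not_lt_zero _ hj
    exact ⟨k, by simp [← hk], hk ▸ hj⟩
  · rintro ⟨k, hk, hj⟩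
    exact hj.trans_le (hβ (by rw [Fin.le_def, Fin.val_succ]; omega))

theorem Mmat_max (α β : Fin (n + 1) → Fin (n + 1)) :
    Mmat (fun i => max (α i) (β i)) = badd (Mmat α) (Mmat β) := by
  ext i j
  simp [Mmat, badd, Fin.coe_max]

theorem Mmat_injOn : Set.InjOn (Mmat (n := n)) {α | α 0 = 0} := by
  intro α hα β hβ h
  funext i
  induction i using Fin.cases with
  | zero => exact hα.trans hβ.symm
  | succ m =>
    refine Fin.eq_of_forall_val_lt_iff fun t => ?_
    simpa [Mmat] using congrFun (congrFun h m) t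

end Mmat

theorem PMP_eq_submatrix {n : ℕ} (α : Fin (n + 1) → Fin (n + 1)) :
    PMP α = (Mmat α).submatrix Fin.rev Fin.rev := by
  rw [PMP, Pmat_bmul, bmul_Pmat, Matrix.submatrix_submatrix]
  rfl

/-- The map `α ↦ P·M(α)·P` is a faithful representation of the
semiring `C⁻_{n+1}` in the semiring of upper triangular Boolean `n×n` matrices:
for monotone decreasing `α, β` of the chain with `n+1` elements, `P·M(α)·P` is
upper triangular, the map preserves products (`αβ` is `α` followed by `β`) and
pointwise-max sums, and the map is injective on monotone decreasing
transformations. -/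
theorem PMP_faithful_representation (n : ℕ) :
    (∀ α : Fin (n + 1) → Fin (n + 1), (Monotone α ∧ ∀ i, α i ≤ i) →
      UpperTri (PMP α)) ∧
    (∀ α β : Fin (n + 1) → Fin (n + 1),
      (Monotone α ∧ ∀ i, α i ≤ i) → (Monotone β ∧ ∀ i, β i ≤ i) →
      PMP (β ∘ α) = bmul (PMP α) (PMP β) ∧
      PMP (fun i => max (α i) (β i)) = badd (PMP α) (PMP β)) ∧
    Set.InjOn (PMP (n := n)) {α | Monotone α ∧ ∀ i, α i ≤ i} := by
  have zero_of_decreasing {α : Fin (n + 1) → Fin (n + 1)} (hα : ∀ i, α i ≤ i) : α 0 = 0 :=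
    Fin.le_zero_iff.mp (hα 0)
  refine ⟨fun α ⟨_, hα⟩ => ?_, fun α β _ ⟨hβ, hβdec⟩ => ⟨?_, ?_⟩, ?_⟩
  · rw [PMP_eq_submatrix]
    exact upperTri_submatrix_rev fun _ _ => Mmat_apply_eq_false_of_lt hα
  · simp only [PMP_eq_submatrix, Mmat_comp hβ (zero_of_decreasing hβdec),
      bmul_submatrix Fin.rev_surjective]
  · simp only [PMP_eq_submatrix, Mmat_max, badd_submatrix]
  · rintro α ⟨-, hα⟩ β ⟨-, hβ⟩ h
    refine Mmat_injOn (zero_of_decreasing hα) (zero_of_decreasing hβ) ?_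
    simpa [PMP_eq_submatrix, Fin.rev_involutive.comp_self] using
      congrArg (Matrix.submatrix · Fin.rev Fin.rev) h
end

section
/- The identity x^n = x^{n+1} holds in the monoid of upper triangular Boolean n×n matrices: for every upper triangular Boolean n×n matrix A, A^n = A^{n+1} (powers computed with Boolean matrix multiplication). -/
/-- Powers of a Boolean matrix under Boolean matrix multiplication. -/
def bpow {n : ℕ} (A : Matrix (Fin n) (Fin n) Bool) : ℕ → Matrix (Fin n) (Fin n) Bool
  | 0 => bId n
  | k + 1 => bmul (bpow A k) A

/-!
Read `A` as the adjacency matrix of a digraph on `Fin n`, so that `bpow A m i j = true` iff some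
walk of length `m` leads from `i` to `j`; upper triangularity says that no edge decreases the
vertex. Split such a walk at its last edge `k → j`: either `k = j`, and this loop at `j` can be
added or removed, or `k < j` and induction on `m` applies to `(i, k)`. Hence the `(i, j)` entries
of `A^m` and `A^(m+1)` agree once `j < i + m`, which holds for every entry when `m = n`.
-/

section

variable {n : ℕ}

lemma bpow_succ_apply_eq_true {A : Matrix (Fin n) (Fin n) Bool} {m : ℕ} {i j : Fin n} :
    bpow A (m + 1) i j = true ↔ ∃ k, bpow A m i k = true ∧ A k j = true := by
  simp [bpow, bmul]

lemma bpow_one (A : Matrix (Fin n) (Fin n) Bool) : bpow A 1 = A := by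
  funext i j
  simp [bpow, bmul, bId]

namespace UpperTri

variable {A : Matrix (Fin n) (Fin n) Bool}

lemma le_of_apply_eq_true (hA : UpperTri A) {i j : Fin n} (h : A i j = true) : i ≤ j :=
  not_lt.1 fun hji => by simp [hA i j hji] at h

lemma bpow_succ_apply (hA : UpperTri A) {m : ℕ} {i j : Fin n} (hm : (j : ℕ) < i + m) :
    bpow A (m + 1) i j = bpow A m i j := by
  induction m generalizing j with
  | zero =>
    have hji : j < i := Fin.lt_def.2 (by simpa using hm)
    rw [bpow_one, hA i j hji]
    simp [bpow, bId, hji.ne']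
  | succ m ih =>
    have ih_of_lt {k : Fin n} (hkj : k < j) : bpow A (m + 1) i k = bpow A m i k :=
      ih (by omega)
    rw [Bool.eq_iff_iff, bpow_succ_apply_eq_true]
    constructor
    · rintro ⟨k, hik, hkj⟩
      rcases (hA.le_of_apply_eq_true hkj).eq_or_lt with rfl | hlt
      · exact hik
      · exact bpow_succ_apply_eq_true.2 ⟨k, ih_of_lt hlt ▸ hik, hkj⟩
    · intro hij
      obtain ⟨k, hik, hkj⟩ := bpow_succ_apply_eq_true.1 hij
      rcases (hA.le_of_apply_eq_true hkj).eq_or_lt with rfl | hlt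
      · exact ⟨k, hij, hkj⟩
      · exact ⟨k, (ih_of_lt hlt).symm ▸ hik, hkj⟩

end UpperTri

end

/-- The identity `x^n = x^{n+1}` holds in the monoid of upper
triangular Boolean `n×n` matrices. -/
theorem upperTri_pow_stable (n : ℕ) (A : Matrix (Fin n) (Fin n) Bool)
    (hA : UpperTri A) : bpow A n = bpow A (n + 1) := by
  funext i j
  exact (hA.bpow_succ_apply (by omega)).symm
end

section
/- For n ≥ 1, the transformations β, γ of the chain {1,…,n+1} defined by β(i) = i+1 for i ≤ n, β(n+1) = n+1, and γ(i) = n for i ≤ n, γ(n+1) = n+1, are monotone and extensive, and they violate the identity x^{n−1} y^{n−1} = x^n y^{n−1} + x^{n−1} y^n in the semiring C_{n+1}: namely (β^{n−1} γ^{n−1})(1) = n while (β^n γ^{n−1} + β^{n−1} γ^n)(1) = n+1, where products are composition (x then y), powers are iterated composition, and + is pointwise maximum. -/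
/-- The transformation `β` of the chain with `n+1` elements given (1-indexed) by
`β(i) = i + 1` for `i ≤ n` and `β(n+1) = n+1`. -/
def shiftMap (n : ℕ) : Fin (n + 1) → Fin (n + 1) :=
  fun i => if h : (i : ℕ) < n then ⟨(i : ℕ) + 1, by omega⟩ else i

/-- The transformation `γ` of the chain with `n+1` elements given (1-indexed) by
`γ(i) = n` for `i ≤ n` and `γ(n+1) = n+1`. -/
def collapseMap (n : ℕ) : Fin (n + 1) → Fin (n + 1) :=
  fun i => if (i : ℕ) < n then ⟨n - 1, by omega⟩ else i

/-! Starting from the bottom `0`, `n - 1` steps of `β` reach `n - 1` and `n` steps reach the top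
`n`; `γ` fixes both, so `β^{n-1} γ^{n-1}` sends `0` to `n - 1` while `β^n γ^{n-1}` sends it to `n`.
(The code is 0-indexed: the chain is `Fin (n + 1)`.) -/

namespace CatalanSemiring

variable {n : ℕ}

theorem shiftMap_monotone : Monotone (shiftMap n) := by
  intro i j hij
  rw [Fin.le_def] at hij
  unfold shiftMap
  split <;> split <;> simp only [Fin.le_def] <;> omega

theorem le_shiftMap (i : Fin (n + 1)) : i ≤ shiftMap n i := by
  unfold shiftMap
  split <;> simp only [Fin.le_def] <;> omega

theorem collapseMap_monotone : Monotone (collapseMap n) := by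
  intro i j hij
  rw [Fin.le_def] at hij
  unfold collapseMap
  split <;> split <;> simp only [Fin.le_def] <;> omega

theorem le_collapseMap (i : Fin (n + 1)) : i ≤ collapseMap n i := by
  unfold collapseMap
  split <;> simp only [Fin.le_def] <;> omega

theorem iterate_shiftMap_zero {k : ℕ} (hk : k ≤ n) :
    (shiftMap n)^[k] 0 = ⟨k, by omega⟩ := by
  induction k with
  | zero => rfl
  | succ k ih =>
    rw [Function.iterate_succ_apply', ih (by omega), shiftMap, dif_pos (show k < n by omega)]

theorem iterate_collapseMap_of_pred_le (m : ℕ) {i : Fin (n + 1)} (hi : n - 1 ≤ i) :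
    (collapseMap n)^[m] i = i := by
  refine Function.iterate_fixed ?_ m
  unfold collapseMap
  split_ifs with h
  · exact Fin.ext (by simp only; omega)
  · rfl

end CatalanSemiring

open CatalanSemiring in
/-- For `n ≥ 1`, the transformations `β = shiftMap n` and
`γ = collapseMap n` of the chain with `n+1` elements are monotone and extensive and
violate the identity `x^{n-1} y^{n-1} = x^n y^{n-1} + x^{n-1} y^n` in the semiring
`C_{n+1}`: `(β^{n-1} γ^{n-1})(1) = n` while
`(β^n γ^{n-1} + β^{n-1} γ^n)(1) = n+1` (products are composition, `x` then `y`;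
`+` is pointwise max; everything here written 0-indexed). -/
theorem catalan_semiring_fails_identity (n : ℕ) :
    Monotone (shiftMap n) ∧ (∀ i, i ≤ shiftMap n i) ∧
    Monotone (collapseMap n) ∧ (∀ i, i ≤ collapseMap n i) ∧
    (collapseMap n)^[n - 1] ((shiftMap n)^[n - 1] ⟨0, by omega⟩) =
      (⟨n - 1, by omega⟩ : Fin (n + 1)) ∧
    max ((collapseMap n)^[n - 1] ((shiftMap n)^[n] ⟨0, by omega⟩))
        ((collapseMap n)^[n] ((shiftMap n)^[n - 1] ⟨0, by omega⟩)) =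
      (⟨n, by omega⟩ : Fin (n + 1)) := by
  have reach_pred := iterate_shiftMap_zero (Nat.sub_le n 1)
  have reach_top := iterate_shiftMap_zero (le_refl n)
  refine ⟨shiftMap_monotone, le_shiftMap, collapseMap_monotone, le_collapseMap, ?_, ?_⟩
  · rw [Fin.mk_zero, reach_pred, iterate_collapseMap_of_pred_le _ le_rfl]
  · rw [Fin.mk_zero, reach_pred, reach_top, iterate_collapseMap_of_pred_le _ (Nat.sub_le n 1),
      iterate_collapseMap_of_pred_le _ le_rfl]
    exact max_eq_left (Fin.mk_le_mk.mpr (Nat.sub_le n 1))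
end
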